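/- arXiv:2602.00578 — 3 statements merged into one kernel-verified Lean document; each statement's English description precedes it below -/
import Mathlib

section
/- Fix a positive integer n, and let G be a subgroup of the group of permutations of ℤ/nℤ each of whose elements is an affine map, i.e. for every g ∈ G there exist a unit a ∈ (ℤ/nℤ)^× and b ∈ ℤ/nℤ with g(x) = a·x + b for all x ∈ ℤ/nℤ. Let λ(G) denote the minimum, over v ∈ ℤ/nℤ, of the cardinality of the G-orbit of v. Then for every v ∈ ℤ/nℤ, λ(G) divides the cardinality of the G-orbit of v. -/
/-!
The stabilizer of `v` is isomorphic to the group `U v = fixingUnits G v` of units `a` for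
which `x ↦ a (x - v) + v` lies in `G`, so `|orbit v| * |U v| = |G|`, and it suffices to find
`u` with `|U v| ∣ |U u|` for every `v`. The translations in `G` are the multiples of some
`d ∣ n`; an element `a` of `U v` lies in `U u` as soon as `d ∣ (a - 1) (u - v)`, and
commutators show `d ∣ (a - 1) (b - 1) (v - w)` for `a ∈ U v`, `b ∈ U w`. If `P ≤ U v` and
`Q ≤ U w` have coprime exponents, then at each prime power `q = p ^ e ∥ d` one of the two
families `a - 1` consists of elements that are `0` or invertible modulo `q` (a unit of order
prime to `p` that is `1` mod `p` is `1` mod `p ^ e`), and the Chinese remainder theorem gives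
`u` with `P, Q ≤ U u`. Taking for `P` the `p`-part of `U v` and for `Q` the `p'`-part of `U w`
shows that any `u` maximizing `|U u|` works.
-/

open scoped Nat

open Function

namespace Ideal

variable {R : Type*} [CommRing R]

theorem forall_mul_mem_or_forall_mul_mem {I : Ideal R} {A B : Set R} {z : R}
    (hAB : ∀ α ∈ A, ∀ β ∈ B, α * β * z ∈ I) (hA : ∀ α ∈ A, α ∈ I ∨ ∃ r, r * α - 1 ∈ I) :
    (∀ α ∈ A, α * z ∈ I) ∨ ∀ β ∈ B, β * z ∈ I := by
  by_cases hAI : ∀ α ∈ A, α ∈ I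
  · exact .inl fun α hα ↦ I.mul_mem_right z (hAI α hα)
  push Not at hAI
  obtain ⟨α, hα, hαI⟩ := hAI
  obtain ⟨r, hr⟩ := (hA α hα).resolve_left hαI
  refine .inr fun β hβ ↦ ?_
  have : β * z = r * (α * β * z) - (r * α - 1) * (β * z) := by ring
  rw [this]
  exact sub_mem (I.mul_mem_left r (hAB α hα β hβ)) (I.mul_mem_right _ hr)

theorem exists_forall_mul_sub_mem {ι : Type*} [Finite ι] {I : ι → Ideal R}
    (hI : Pairwise (IsCoprime on I)) {A B : Set R} {v w : R}
    (hAB : ∀ i, ∀ α ∈ A, ∀ β ∈ B, α * β * (v - w) ∈ I i)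
    (hunit : ∀ i, (∀ α ∈ A, α ∈ I i ∨ ∃ r, r * α - 1 ∈ I i) ∨
      (∀ β ∈ B, β ∈ I i ∨ ∃ r, r * β - 1 ∈ I i)) :
    ∃ u, ∀ i, (∀ α ∈ A, α * (u - v) ∈ I i) ∧ ∀ β ∈ B, β * (u - w) ∈ I i := by
  classical
  have hlocal (i : ι) : (∀ α ∈ A, α * (v - w) ∈ I i) ∨ ∀ β ∈ B, β * (v - w) ∈ I i := by
    rcases hunit i with hA | hB
    · exact forall_mul_mem_or_forall_mul_mem (hAB i) hA
    · refine (forall_mul_mem_or_forall_mul_mem (fun β hβ α hα ↦ ?_) hB).symm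
      simpa only [mul_comm β α] using hAB i α hα β hβ
  obtain ⟨u, hu⟩ := exists_forall_sub_mem_ideal hI
    fun i ↦ if ∀ α ∈ A, α * (v - w) ∈ I i then w else v
  refine ⟨u, fun i ↦ ?_⟩
  specialize hu i
  split_ifs at hu with hA
  · refine ⟨fun α hα ↦ ?_, fun β _ ↦ I i |>.mul_mem_left β hu⟩
    have : α * (u - v) = α * (u - w) - α * (v - w) := by ring
    rw [this]
    exact sub_mem ((I i).mul_mem_left α hu) (hA α hα)
  · refine ⟨fun α _ ↦ I i |>.mul_mem_left α hu, fun β hβ ↦ ?_⟩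
    have : β * (u - w) = β * (u - v) + β * (v - w) := by ring
    rw [this]
    exact add_mem ((I i).mul_mem_left β hu) ((hlocal i).resolve_left hA β hβ)

end Ideal

theorem Subgroup.exists_le_dvd_card_forall_pow_eq_one {M : Type*} [CommGroup M] (H : Subgroup M)
    [Finite H] {m k : ℕ} (hcard : Nat.card H = m * k) (hmk : m.Coprime k) :
    ∃ P ≤ H, m ∣ Nat.card P ∧ ∀ a ∈ P, a ^ m = 1 := by
  let f : H →* M := (powMonoidHom k).comp H.subtype
  refine ⟨f.range, ?_, ?_, ?_⟩
  · rintro _ ⟨x, rfl⟩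
    exact pow_mem x.2 k
  · have hker : (Nat.card f.ker).Coprime m := by
      have : Nat.card f.ker ∣ k ^ Group.rank f.ker :=
        card_dvd_exponent_pow_rank' f.ker fun g ↦ Subtype.ext (Subtype.ext g.2)
      exact (hmk.symm.pow_left _).coprime_dvd_left this
    have hsplit : Nat.card f.range * Nat.card f.ker = m * k := by
      rw [← hcard, ← Subgroup.index_ker f, mul_comm, Subgroup.card_mul_index]
    exact hker.symm.dvd_of_dvd_mul_right (hsplit ▸ dvd_mul_right m k)
  · rintro _ ⟨x, rfl⟩
    change ((x : M) ^ k) ^ m = 1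
    rw [← pow_mul, mul_comm, ← hcard, ← Subgroup.coe_pow, pow_card_eq_one', Subgroup.coe_one]

theorem Nat.exists_forall_dvd_of_ordProj_mul_ordCompl_dvd {α : Type*} [Finite α] [Nonempty α]
    (f : α → ℕ) (hf : ∀ x, f x ≠ 0)
    (h : ∀ p, p.Prime → ∀ x y, ∃ z, ordProj[p] (f x) * ordCompl[p] (f y) ∣ f z) :
    ∃ z, ∀ x, f x ∣ f z := by
  obtain ⟨z, hz⟩ := Finite.exists_max f
  refine ⟨z, fun x ↦ (Nat.factorization_le_iff_dvd (hf x) (hf z)).mp fun p ↦ ?_⟩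
  by_cases hp : p.Prime
  swap
  · simp [Nat.factorization_eq_zero_of_not_prime _ hp]
  obtain ⟨y, hy⟩ := h p hp x z
  have hle : ordProj[p] (f x) * ordCompl[p] (f z) ≤ ordProj[p] (f z) * ordCompl[p] (f z) := by
    rw [Nat.ordProj_mul_ordCompl_eq_self]
    exact (Nat.le_of_dvd (Nat.pos_of_ne_zero (hf y)) hy).trans (hz y)
  exact (Nat.pow_le_pow_iff_right hp.one_lt).mp
    (Nat.le_of_mul_le_mul_right hle (Nat.ordCompl_pos p (hf z)))

theorem Nat.isCoprime_cast_ordProj {R : Type*} [CommRing R] {d p q : ℕ} (hp : p ∈ d.primeFactors)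
    (hq : q ∈ d.primeFactors) (hpq : p ≠ q) :
    IsCoprime ((ordProj[p] d : ℕ) : R) ((ordProj[q] d : ℕ) : R) :=
  (Nat.coprime_pow_primes _ _ (Nat.prime_of_mem_primeFactors hp)
    (Nat.prime_of_mem_primeFactors hq) hpq).cast

theorem Nat.cast_dvd_iff_forall_ordProj_dvd {R : Type*} [CommRing R] {d : ℕ} (hd : d ≠ 0)
    {c : R} :
    (d : R) ∣ c ↔ ∀ p ∈ d.primeFactors, ((ordProj[p] d : ℕ) : R) ∣ c := by
  refine ⟨fun h p _ ↦ (Nat.cast_dvd_cast (Nat.ordProj_dvd d p)).trans h, fun h ↦ ?_⟩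
  have := Finset.prod_dvd_of_coprime (fun p hp q hq hpq ↦ Nat.isCoprime_cast_ordProj hp hq hpq) h
  rwa [← Nat.cast_prod, ← Nat.prod_primeFactors_pow_factorization hd] at this

theorem ZMod.eq_one_or_isUnit_sub_one_of_pow_eq_one {p E m : ℕ} (hp : p.Prime) (hm : ¬p ∣ m)
    {x : ZMod (p ^ E)} (hx : x ^ m = 1) : x = 1 ∨ IsUnit (x - 1) := by
  refine or_iff_not_imp_right.mpr fun hunit ↦ ?_
  have : NeZero (p ^ E) := ⟨pow_ne_zero E hp.ne_zero⟩
  have hpx : (p : ZMod (p ^ E)) ∣ x - 1 := by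
    rw [← ZMod.natCast_zmod_val (x - 1), ZMod.isUnit_iff_coprime] at hunit
    rw [← ZMod.natCast_zmod_val (x - 1)]
    refine Nat.cast_dvd_cast (by_contra fun hpx ↦ hunit ?_)
    exact ((hp.coprime_iff_not_dvd.mpr hpx).pow_left E).symm
  cases E with
  | zero => exact Subsingleton.elim (α := ZMod 1) _ _
  | succ k =>
    have hpk : x ^ p ^ k = 1 := by
      have := dvd_sub_pow_of_dvd_sub hpx k
      rwa [one_pow, ← Nat.cast_pow, ZMod.natCast_self, zero_dvd_iff, sub_eq_zero] at this
    have hcop : m.Coprime (p ^ k) := ((Nat.Prime.coprime_iff_not_dvd hp).mpr hm).symm.pow_right k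
    simpa [hcop.gcd_eq_one] using pow_gcd_eq_one.mpr ⟨hx, hpk⟩

namespace ZMod

variable {n : ℕ} [NeZero n]

theorem castHom_eq_zero_iff {m : ℕ} (h : m ∣ n) (y : ZMod n) :
    castHom h (ZMod m) y = 0 ↔ (m : ZMod n) ∣ y := by
  refine ⟨fun hy ↦ ?_, fun ⟨z, hz⟩ ↦ by
    rw [hz, map_mul, map_natCast, natCast_self, zero_mul]⟩
  rw [← natCast_zmod_val y, map_natCast, natCast_eq_zero_iff] at hy
  obtain ⟨k, hk⟩ := hy
  exact ⟨k, by rw [← natCast_zmod_val y, hk, Nat.cast_mul]⟩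

theorem exists_mem_iff_natCast_dvd (T : AddSubgroup (ZMod n)) :
    ∃ d, d ∣ n ∧ ∀ c, c ∈ T ↔ (d : ZMod n) ∣ c := by
  obtain ⟨k, hk⟩ := Int.subgroup_cyclic (T.comap (Int.castAddHom (ZMod n)))
  have hmem (z : ℤ) : (z : ZMod n) ∈ T ↔ (k.natAbs : ℤ) ∣ z := by
    rw [Int.natAbs_dvd, ← Int.mem_zmultiples_iff, AddSubgroup.zmultiples_eq_closure, ← hk]
    rfl
  have hdn : k.natAbs ∣ n := by
    exact_mod_cast (hmem n).mp (by simp)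
  refine ⟨k.natAbs, hdn, fun c ↦ ?_⟩
  rw [← castHom_eq_zero_iff hdn, ← natCast_zmod_val c, map_natCast, natCast_eq_zero_iff,
    ← Int.natCast_dvd_natCast, ← hmem]
  simp

theorem sub_one_mem_or_exists_mul_sub_one_mem {p E m : ℕ} (hp : p.Prime) (hm : ¬p ∣ m)
    (hpn : p ^ E ∣ n) {a : (ZMod n)ˣ} (ha : a ^ m = 1) :
    ((a : ZMod n) - 1) ∈ Ideal.span {((p ^ E : ℕ) : ZMod n)} ∨
      ∃ r, r * ((a : ZMod n) - 1) - 1 ∈ Ideal.span {((p ^ E : ℕ) : ZMod n)} := by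
  let ψ := castHom hpn (ZMod (p ^ E))
  have hψ : ψ a ^ m = 1 := by
    rw [← map_pow, ← Units.val_pow_eq_pow_val, ha, Units.val_one, map_one]
  simp only [Ideal.mem_span_singleton, ← castHom_eq_zero_iff hpn]
  rcases eq_one_or_isUnit_sub_one_of_pow_eq_one hp hm hψ with h | ⟨u, hu⟩
  · left
    rw [map_sub, map_one, h, sub_self]
  · right
    obtain ⟨r, hr⟩ := ringHom_surjective ψ ↑u⁻¹
    refine ⟨r, ?_⟩
    rw [map_sub, map_mul, map_sub, map_one, hr, ← hu, Units.inv_mul, sub_self]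

end ZMod

def translations {α : Type*} [AddGroup α] (G : Subgroup (Equiv.Perm α)) : AddSubgroup α :=
  (Subgroup.toAddSubgroup G).comap (AddAction.toPermHom α α)

theorem mem_translations {α : Type*} [AddGroup α] {G : Subgroup (Equiv.Perm α)} {c : α} :
    c ∈ translations G ↔ Equiv.addLeft c ∈ G := Iff.rfl

section Affine

variable {R : Type*} [CommRing R]

def affineAt (v : R) : Rˣ →* Equiv.Perm R :=
  (MulAut.conj (Equiv.addRight v)).toMonoidHom.comp (MulAction.toPermHom Rˣ R)

@[simp]
theorem affineAt_apply (v : R) (a : Rˣ) (x : R) : affineAt v a x = a * (x - v) + v := by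
  simp [affineAt, Units.smul_def]
  ring

def fixingUnits (G : Subgroup (Equiv.Perm R)) (v : R) : Subgroup Rˣ := G.comap (affineAt v)

variable {G : Subgroup (Equiv.Perm R)}

theorem affineAt_injective (v : R) : Injective (affineAt v) := fun a b h ↦
  Units.ext (by simpa using Equiv.congr_fun h (v + 1))

theorem card_stabilizer_eq_card_fixingUnits
    (hG : ∀ g ∈ G, ∃ (a : Rˣ) (b : R), ∀ x, g x = a * x + b) (v : R) :
    Nat.card (MulAction.stabilizer G v) = Nat.card (fixingUnits G v) := by
  let f (a : fixingUnits G v) : MulAction.stabilizer G v :=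
    ⟨⟨affineAt v a, a.2⟩, by simp [MulAction.mem_stabilizer_iff, Subgroup.smul_def]⟩
  refine (Nat.card_eq_of_bijective f ⟨fun a b h ↦ ?_, ?_⟩).symm
  · exact Subtype.ext <| affineAt_injective v <|
      congrArg (fun g : MulAction.stabilizer G v ↦ ((g : G) : Equiv.Perm R)) h
  · rintro ⟨⟨g, hg⟩, hgv⟩
    obtain ⟨a, b, hab⟩ := hG g hg
    have hb : b = v - a * v := by
      have hgv : g v = v := hgv
      linear_combination hgv - hab v
    have : affineAt v a = g := Equiv.ext fun x ↦ by
      rw [affineAt_apply, hab, hb]; ring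
    exact ⟨⟨a, by simpa [fixingUnits, this] using hg⟩, by subst this; rfl⟩

theorem commutator_mem_translations {a b : Rˣ} {v w : R} (ha : a ∈ fixingUnits G v)
    (hb : b ∈ fixingUnits G w) : (a - 1 : R) * (b - 1) * (v - w) ∈ translations G := by
  have : Equiv.addLeft ((a - 1 : R) * (b - 1) * (v - w)) =
      affineAt v a * affineAt w b * (affineAt w b * affineAt v a)⁻¹ := by
    rw [eq_mul_inv_iff_mul_eq]
    ext x
    simp only [Equiv.Perm.mul_apply, affineAt_apply, Equiv.coe_addLeft]
    ring
  rw [mem_translations, this]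
  exact mul_mem (mul_mem ha hb) (inv_mem (mul_mem hb ha))

theorem mem_fixingUnits_of_mem_translations {a : Rˣ} {v u : R} (ha : a ∈ fixingUnits G v)
    (h : (a - 1 : R) * (u - v) ∈ translations G) : a ∈ fixingUnits G u := by
  have : affineAt u a = Equiv.addLeft (-((a - 1 : R) * (u - v))) * affineAt v a := by
    ext x
    simp only [Equiv.Perm.mul_apply, affineAt_apply, Equiv.coe_addLeft]
    ring
  change affineAt u a ∈ G
  rw [this]
  exact mul_mem (neg_mem h) ha

theorem card_orbit_mul_card_fixingUnits
    (hG : ∀ g ∈ G, ∃ (a : Rˣ) (b : R), ∀ x, g x = a * x + b) (v : R) :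
    Nat.card (MulAction.orbit G v) * Nat.card (fixingUnits G v) = Nat.card G := by
  rw [Nat.card_congr (MulAction.orbitEquivQuotientStabilizer G v),
    ← card_stabilizer_eq_card_fixingUnits hG, mul_comm]
  exact (MulAction.stabilizer G v).card_mul_index

theorem card_orbit_dvd_card_orbit [Finite Rˣ]
    (hG : ∀ g ∈ G, ∃ (a : Rˣ) (b : R), ∀ x, g x = a * x + b) {u w : R}
    (h : Nat.card (fixingUnits G w) ∣ Nat.card (fixingUnits G u)) :
    Nat.card (MulAction.orbit G u) ∣ Nat.card (MulAction.orbit G w) := by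
  obtain ⟨k, hk⟩ := h
  refine ⟨k, Nat.eq_of_mul_eq_mul_right (Nat.card_pos (α := fixingUnits G w)) ?_⟩
  rw [card_orbit_mul_card_fixingUnits hG, ← card_orbit_mul_card_fixingUnits hG u, hk]
  ring

end Affine

section ZModAffine

variable {n : ℕ} [NeZero n] {G : Subgroup (Equiv.Perm (ZMod n))}

theorem exists_le_fixingUnits_of_coprime {P Q : Subgroup (ZMod n)ˣ} {v w : ZMod n}
    (hPv : P ≤ fixingUnits G v) (hQw : Q ≤ fixingUnits G w) {k l : ℕ} (hkl : k.Coprime l)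
    (hPk : ∀ a ∈ P, a ^ k = 1) (hQl : ∀ b ∈ Q, b ^ l = 1) :
    ∃ u, P ≤ fixingUnits G u ∧ Q ≤ fixingUnits G u := by
  obtain ⟨d, hdn, hT⟩ := ZMod.exists_mem_iff_natCast_dvd (translations G)
  let I (q : d.primeFactors) : Ideal (ZMod n) := Ideal.span {((ordProj[q] d : ℕ) : ZMod n)}
  have hTI (c : ZMod n) : c ∈ translations G ↔ ∀ q, c ∈ I q := by
    rw [hT, Nat.cast_dvd_iff_forall_ordProj_dvd (ne_zero_of_dvd_ne_zero (NeZero.ne n) hdn)]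
    simp [I, Ideal.mem_span_singleton]
  have hI : Pairwise (IsCoprime on I) := fun q r hqr ↦
    (Ideal.isCoprime_span_singleton_iff _ _).mpr
      (Nat.isCoprime_cast_ordProj q.2 r.2 (Subtype.coe_injective.ne hqr))
  obtain ⟨u, hu⟩ := Ideal.exists_forall_mul_sub_mem hI (v := v) (w := w)
    (A := (fun a : (ZMod n)ˣ ↦ (a : ZMod n) - 1) '' P)
    (B := (fun b : (ZMod n)ˣ ↦ (b : ZMod n) - 1) '' Q)
    (by
      rintro q _ ⟨a, ha, rfl⟩ _ ⟨b, hb, rfl⟩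
      exact (hTI _).mp (commutator_mem_translations (hPv ha) (hQw hb)) q)
    (by
      rintro ⟨q, hq⟩
      have hqn : q ^ d.factorization q ∣ n := (Nat.ordProj_dvd d q).trans hdn
      have hq := Nat.prime_of_mem_primeFactors hq
      by_cases hqk : q ∣ k
      · have hql : ¬q ∣ l := fun hql ↦ hq.one_lt.ne' (Nat.eq_one_of_dvd_coprimes hkl hqk hql)
        right
        rintro _ ⟨b, hb, rfl⟩
        exact ZMod.sub_one_mem_or_exists_mul_sub_one_mem hq hql hqn (hQl b hb)
      · left
        rintro _ ⟨a, ha, rfl⟩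
        exact ZMod.sub_one_mem_or_exists_mul_sub_one_mem hq hqk hqn (hPk a ha))
  refine ⟨u, fun a ha ↦ ?_, fun b hb ↦ ?_⟩
  · exact mem_fixingUnits_of_mem_translations (hPv ha)
      ((hTI _).mpr fun q ↦ (hu q).1 _ ⟨a, ha, rfl⟩)
  · exact mem_fixingUnits_of_mem_translations (hQw hb)
      ((hTI _).mpr fun q ↦ (hu q).2 _ ⟨b, hb, rfl⟩)

theorem exists_ordProj_mul_ordCompl_dvd_card_fixingUnits {p : ℕ} (hp : p.Prime)
    (v w : ZMod n) :
    ∃ u, ordProj[p] (Nat.card (fixingUnits G v)) * ordCompl[p] (Nat.card (fixingUnits G w)) ∣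
      Nat.card (fixingUnits G u) := by
  set s := Nat.card (fixingUnits G v)
  set t := Nat.card (fixingUnits G w)
  have hs : (ordProj[p] s).Coprime (ordCompl[p] s) :=
    (Nat.coprime_ordCompl hp Nat.card_pos.ne').pow_left _
  have ht : (ordProj[p] t).Coprime (ordCompl[p] t) :=
    (Nat.coprime_ordCompl hp Nat.card_pos.ne').pow_left _
  have hst : (ordProj[p] s).Coprime (ordCompl[p] t) :=
    (Nat.coprime_ordCompl hp Nat.card_pos.ne').pow_left _
  obtain ⟨P, hPv, hPcard, hPpow⟩ := (fixingUnits G v).exists_le_dvd_card_forall_pow_eq_one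
    (Nat.ordProj_mul_ordCompl_eq_self s p).symm hs
  obtain ⟨Q, hQw, hQcard, hQpow⟩ := (fixingUnits G w).exists_le_dvd_card_forall_pow_eq_one
    (by rw [mul_comm, Nat.ordProj_mul_ordCompl_eq_self]) ht.symm
  obtain ⟨u, hPu, hQu⟩ := exists_le_fixingUnits_of_coprime hPv hQw hst hPpow hQpow
  exact ⟨u, hst.mul_dvd_of_dvd_of_dvd (hPcard.trans (Subgroup.card_dvd_of_le hPu))
    (hQcard.trans (Subgroup.card_dvd_of_le hQu))⟩

end ZModAffine

theorem stmt_6 (n : ℕ) (hn : 0 < n) (G : Subgroup (Equiv.Perm (ZMod n)))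
    (hG : ∀ g ∈ G, ∃ (a : (ZMod n)ˣ) (b : ZMod n), ∀ x : ZMod n, g x = a * x + b)
    (v : ZMod n) :
    sInf {k : ℕ | ∃ w : ZMod n, k = Nat.card (MulAction.orbit G w)} ∣
      Nat.card (MulAction.orbit G v) := by
  have : NeZero n := ⟨hn.ne'⟩
  obtain ⟨u, hu⟩ := Nat.exists_forall_dvd_of_ordProj_mul_ordCompl_dvd
    (fun v ↦ Nat.card (fixingUnits G v)) (fun _ ↦ Nat.card_pos.ne')
    fun _ hp v w ↦ exists_ordProj_mul_ordCompl_dvd_card_fixingUnits hp v w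
  have hdvd (w : ZMod n) := card_orbit_dvd_card_orbit hG (hu w)
  have hmin : sInf {k : ℕ | ∃ w : ZMod n, k = Nat.card (MulAction.orbit G w)} =
      Nat.card (MulAction.orbit G u) :=
    IsLeast.csInf_eq ⟨⟨u, rfl⟩, by
      rintro _ ⟨w, rfl⟩
      have : Nonempty (MulAction.orbit G w) := (MulAction.nonempty_orbit w).to_subtype
      exact Nat.le_of_dvd Nat.card_pos (hdvd w)⟩
  exact hmin ▸ hdvd v
end

section
/- Let p be a prime, l a positive integer, and n = p^l. Let G be a subgroup of the group of permutations of ℤ/nℤ each of whose elements is an affine map, i.e. for every g ∈ G there exist a unit a ∈ (ℤ/nℤ)^× and b ∈ ℤ/nℤ with g(x) = a·x + b for all x ∈ ℤ/nℤ. Let λ(G) denote the minimum, over v ∈ ℤ/nℤ, of the cardinality of the G-orbit of v. Then for every v ∈ ℤ/nℤ, λ(G) divides the cardinality of the G-orbit of v. -/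
/-!
Let `π g ∈ (ℤ/nℤ)ˣ` be the multiplier of `g ∈ G`. An element of the stabilizer of `u` is
`x ↦ a (x - u) + u`, so `π` is injective on every stabilizer, and `|Stab u| = |π(Stab u)|`.

If some `g₀ ∈ G` has `π g₀ - 1` a unit, then `g₀` fixes a point `w`. Commutators with `g₀` are
translations, and the translations in `G` form an ideal of `ℤ/nℤ`; this is enough to correct any
`g ∈ G` by a translation into the stabilizer of `w`. So `π(Stab w) = π(G) ⊇ π(Stab u)`, the
stabilizer of `w` is the largest one, and by orbit–stabilizer `|Gw|` divides every `|Gu|`.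

Otherwise every multiplier is `≡ 1 mod p`. Then `π(G)` lies in the kernel of
`(ℤ/p^lℤ)ˣ → (ℤ/pℤ)ˣ`, of order `p^(l-1)`, and `ker π` consists of translations, so `G` is a
`p`-group and all orbit sizes are powers of `p`, totally ordered by divisibility.
-/

open MulAction Equiv

theorem MulAction.card_orbit_dvd_of_card_stabilizer_dvd {G X : Type*} [Group G] [MulAction G X]
    [Finite G] {x y : X} (h : Nat.card (stabilizer G y) ∣ Nat.card (stabilizer G x)) :
    Nat.card (orbit G x) ∣ Nat.card (orbit G y) := by
  obtain ⟨k, hk⟩ := h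
  have orbit_mul_stabilizer (z : X) :
      Nat.card (orbit G z) * Nat.card (stabilizer G z) = Nat.card G := by
    rw [Nat.card_coe_set_eq, ← index_stabilizer, mul_comm, Subgroup.card_mul_index]
  refine ⟨k, Nat.eq_of_mul_eq_mul_right (Nat.card_pos : 0 < Nat.card (stabilizer G y)) ?_⟩
  rw [orbit_mul_stabilizer, mul_assoc, mul_comm k, ← hk, orbit_mul_stabilizer]

theorem Nat.sInf_range_dvd_of_min_dvd {α : Type*} (f : α → ℕ) (v : α)
    (h : ∀ u, (∀ w, f u ≤ f w) → f u ∣ f v) : sInf {k | ∃ w, k = f w} ∣ f v := by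
  obtain ⟨u, hu⟩ : sInf {k | ∃ w, k = f w} ∈ {k | ∃ w, k = f w} := Nat.sInf_mem ⟨f v, v, rfl⟩
  rw [hu]
  exact h u fun w => hu ▸ Nat.sInf_le ⟨w, rfl⟩

theorem IsPGroup.of_ker_of_range_le {p : ℕ} {G K : Type*} [Group G] [Group K] {f : G →* K}
    {H : Subgroup K} (hH : IsPGroup p H) (hker : IsPGroup p f.ker) (hle : f.range ≤ H) :
    IsPGroup p G := by
  intro g
  obtain ⟨k, hk⟩ := hH.comap_of_ker_isPGroup f hker ⟨g, hle ⟨g, rfl⟩⟩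
  exact ⟨k, congrArg Subtype.val hk⟩

namespace ZMod

variable {p l : ℕ} [Fact p.Prime]

theorem isPGroup_ker_unitsMap (hl : l ≠ 0) : IsPGroup p (unitsMap (dvd_pow_self p hl)).ker := by
  refine IsPGroup.of_card (n := l - 1) ?_
  have hp := (Fact.out : p.Prime)
  have hcard := (unitsMap (dvd_pow_self p hl)).ker.card_mul_index
  rw [Subgroup.index_ker, MonoidHom.range_eq_top.mpr (unitsMap_surjective _), Subgroup.card_top,
    Nat.card_eq_fintype_card (α := (ZMod p)ˣ), Nat.card_eq_fintype_card (α := (ZMod (p ^ l))ˣ),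
    card_units_eq_totient, card_units_eq_totient, Nat.totient_prime hp,
    Nat.totient_prime_pow hp (Nat.pos_of_ne_zero hl)] at hcard
  exact Nat.eq_of_mul_eq_mul_right (Nat.sub_pos_of_lt hp.one_lt) hcard

theorem unitsMap_eq_one_of_not_isUnit_sub_one (hl : l ≠ 0) {a : (ZMod (p ^ l))ˣ}
    (ha : ¬IsUnit ((a : ZMod (p ^ l)) - 1)) : unitsMap (dvd_pow_self p hl) a = 1 := by
  have hp := (Fact.out : p.Prime)
  rw [← natCast_zmod_val ((a : ZMod (p ^ l)) - 1),
    isUnit_natCast_iff_not_dvd_pow hp (Nat.pos_of_ne_zero hl), not_not,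
    ← natCast_eq_zero_iff] at ha
  refine Units.ext ?_
  rw [unitsMap_val, Units.val_one, ← sub_eq_zero, ← ha, natCast_val,
    cast_sub (dvd_pow_self p hl), cast_one (dvd_pow_self p hl)]

end ZMod

variable {R : Type*} [CommRing R]

def IsAffinePermGroup (G : Subgroup (Perm R)) : Prop :=
  ∀ g ∈ G, ∃ (a : Rˣ) (b : R), ∀ x, g x = a * x + b

namespace IsAffinePermGroup

variable {G : Subgroup (Perm R)}

theorem apply_eq_sub_mul_add (hG : IsAffinePermGroup G) (g : G) (x : R) :
    (g : Perm R) x = ((g : Perm R) 1 - (g : Perm R) 0) * x + (g : Perm R) 0 := by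
  obtain ⟨a, b, h⟩ := hG g g.2
  rw [h, h, h]
  ring

theorem isUnit_sub (hG : IsAffinePermGroup G) (g : G) :
    IsUnit ((g : Perm R) 1 - (g : Perm R) 0) := by
  obtain ⟨a, b, h⟩ := hG g g.2
  simp [h]

variable (hG : IsAffinePermGroup G)

noncomputable def multiplier : G →* Rˣ where
  toFun g := (hG.isUnit_sub g).unit
  map_one' := Units.ext (by simp)
  map_mul' g h := Units.ext <| by
    simp only [IsUnit.unit_spec, Units.val_mul, Subgroup.coe_mul, Perm.mul_apply]
    rw [hG.apply_eq_sub_mul_add g ((h : Perm R) 1), hG.apply_eq_sub_mul_add g ((h : Perm R) 0)]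
    ring

theorem coe_multiplier (g : G) :
    (hG.multiplier g : R) = (g : Perm R) 1 - (g : Perm R) 0 := rfl

theorem apply_eq (g : G) (x : R) :
    (g : Perm R) x = hG.multiplier g * x + (g : Perm R) 0 :=
  hG.apply_eq_sub_mul_add g x

theorem apply_eq_of_mem_stabilizer {u : R} {g : G} (hg : g ∈ stabilizer G u) (x : R) :
    (g : Perm R) x = hG.multiplier g * (x - u) + u := by
  have hu : (g : Perm R) u = u := hg
  have := hG.apply_eq g u
  rw [hG.apply_eq g x]
  linear_combination (-1 : R) * this + hu

theorem injOn_multiplier_stabilizer (u : R) : Set.InjOn hG.multiplier (stabilizer G u) :=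
  fun g hg g' hg' h => Subtype.ext <| Equiv.ext fun x => by
    rw [hG.apply_eq_of_mem_stabilizer hg, hG.apply_eq_of_mem_stabilizer hg', h]

theorem card_map_multiplier_stabilizer (u : R) :
    Nat.card ((stabilizer G u).map hG.multiplier) = Nat.card (stabilizer G u) := by
  rw [← SetLike.coe_sort_coe, Subgroup.coe_map,
    Nat.card_image_of_injOn (hG.injOn_multiplier_stabilizer u)]
  rfl

theorem multiplier_eq_one_of_coe_eq_addRight {g : G} {d : R}
    (h : (g : Perm R) = Equiv.addRight d) : hG.multiplier g = 1 :=
  Units.ext <| by simp [coe_multiplier, h]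

theorem apply_eq_add_of_mem_ker {g : G} (hg : g ∈ hG.multiplier.ker) (x : R) :
    (g : Perm R) x = x + (g : Perm R) 0 := by
  rw [hG.apply_eq, MonoidHom.mem_ker.mp hg, Units.val_one, one_mul]

def translation : hG.multiplier.ker →* Multiplicative R where
  toFun g := Multiplicative.ofAdd (((g : G) : Perm R) 0)
  map_one' := rfl
  map_mul' g h := by
    rw [← ofAdd_add, add_comm]
    exact congrArg _ (hG.apply_eq_add_of_mem_ker g.2 _)

theorem translation_injective : Function.Injective hG.translation :=
  fun g h hgh => Subtype.ext <| Subtype.ext <| Equiv.ext fun x => by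
    rw [hG.apply_eq_add_of_mem_ker g.2, hG.apply_eq_add_of_mem_ker h.2]
    exact congrArg (x + ·) hgh

theorem exists_mem_stabilizer_of_isUnit {g : G} (h : IsUnit ((hG.multiplier g : R) - 1)) :
    ∃ w : R, g ∈ stabilizer G w := by
  refine ⟨-(↑h.unit⁻¹ * (g : Perm R) 0), ?_⟩
  rw [mem_stabilizer_iff]
  show (g : Perm R) _ = _
  have := h.unit.mul_inv
  rw [IsUnit.unit_spec] at this
  rw [hG.apply_eq]
  linear_combination (-(g : Perm R) 0) * this

end IsAffinePermGroup

section AffineZMod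

variable {n : ℕ} {G : Subgroup (Perm (ZMod n))}

theorem Subgroup.addRight_mul_mem {d : ZMod n} (h : Equiv.addRight d ∈ G) (r : ZMod n) :
    Equiv.addRight (r * d) ∈ G := by
  have : Equiv.addRight (r * d) = Equiv.addRight d ^ (r.cast : ℤ) := by
    rw [Equiv.zsmul_addRight, zsmul_eq_mul, ZMod.intCast_zmod_cast]
  exact this ▸ zpow_mem h _

namespace IsAffinePermGroup

variable (hG : IsAffinePermGroup G)

theorem exists_mem_stabilizer_multiplier_eq {w : ZMod n} {g₀ : G} (hg₀ : g₀ ∈ stabilizer G w)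
    (hunit : IsUnit ((hG.multiplier g₀ : ZMod n) - 1)) (g : G) :
    ∃ g' ∈ stabilizer G w, hG.multiplier g' = hG.multiplier g := by
  have hg := hG.apply_eq g
  set a : ZMod n := (hG.multiplier g : ZMod n)
  set b : ZMod n := (hG.multiplier g₀ : ZMod n)
  set c := (g : Perm (ZMod n)) 0
  set δ := (1 - b) * (a * w + c - w) with hδ_def
  have hcomm : Equiv.addRight δ = ((g * g₀ * (g₀ * g)⁻¹ : G) : Perm (ZMod n)) := by
    rw [Subgroup.coe_mul, Subgroup.coe_inv, eq_mul_inv_iff_mul_eq]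
    ext x
    simp only [Subgroup.coe_mul, Perm.mul_apply, Equiv.coe_addRight]
    rw [hg x, hG.apply_eq_of_mem_stabilizer hg₀, hG.apply_eq_of_mem_stabilizer hg₀, hg]
    ring
  have hδ : Equiv.addRight δ ∈ G := hcomm ▸ SetLike.coe_mem _
  -- `g τ` fixes `w` for the translation `τ` by `(a (b - 1))⁻¹ δ = a⁻¹ (w - g w)`.
  let r : ZMod n := ↑(hG.multiplier g)⁻¹ * ↑hunit.unit⁻¹
  let τ : G := ⟨_, Subgroup.addRight_mul_mem hδ r⟩
  have hτ : (τ : Perm (ZMod n)) = Equiv.addRight (r * δ) := rfl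
  refine ⟨g * τ, ?_, ?_⟩
  · change ((g * τ : G) : Perm (ZMod n)) w = w
    have ha := (hG.multiplier g).mul_inv
    have he := hunit.unit.inv_mul
    rw [IsUnit.unit_spec] at he
    rw [Subgroup.coe_mul, Perm.mul_apply, hτ, Equiv.coe_addRight, hg]
    linear_combination (-(a * w + c - w) * a * ↑(hG.multiplier g)⁻¹) * he - (a * w + c - w) * ha
  · rw [map_mul, hG.multiplier_eq_one_of_coe_eq_addRight hτ, mul_one]

theorem card_orbit_dvd [NeZero n] {w : ZMod n} {g₀ : G} (hg₀ : g₀ ∈ stabilizer G w)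
    (hunit : IsUnit ((hG.multiplier g₀ : ZMod n) - 1)) (u : ZMod n) :
    Nat.card (orbit G w) ∣ Nat.card (orbit G u) := by
  have hmap : (stabilizer G w).map hG.multiplier = hG.multiplier.range := by
    refine le_antisymm (Subgroup.map_le_range _ _) ?_
    rintro _ ⟨g, rfl⟩
    obtain ⟨g', hg', h⟩ := hG.exists_mem_stabilizer_multiplier_eq hg₀ hunit g
    exact ⟨g', hg', h⟩
  refine card_orbit_dvd_of_card_stabilizer_dvd ?_
  rw [← hG.card_map_multiplier_stabilizer, ← hG.card_map_multiplier_stabilizer, hmap]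
  exact Subgroup.card_dvd_of_le (Subgroup.map_le_range _ _)

end IsAffinePermGroup

end AffineZMod

theorem IsAffinePermGroup.isPGroup {p l : ℕ} [Fact p.Prime] (hl : l ≠ 0)
    {G : Subgroup (Perm (ZMod (p ^ l)))} (hG : IsAffinePermGroup G)
    (h : ∀ g : G, ¬IsUnit ((hG.multiplier g : ZMod (p ^ l)) - 1)) : IsPGroup p G := by
  refine IsPGroup.of_ker_of_range_le (f := hG.multiplier) (ZMod.isPGroup_ker_unitsMap hl) ?_ ?_
  · exact (ZModModule.isPGroup_multiplicative (n := p ^ l)).of_pow.of_injective _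
      hG.translation_injective
  · rintro _ ⟨g, rfl⟩
    exact ZMod.unitsMap_eq_one_of_not_isUnit_sub_one hl (h g)

theorem stmt_7 (p : ℕ) (hp : p.Prime) (l : ℕ) (hl : 0 < l)
    (G : Subgroup (Equiv.Perm (ZMod (p ^ l))))
    (hG : ∀ g ∈ G, ∃ (a : (ZMod (p ^ l))ˣ) (b : ZMod (p ^ l)),
      ∀ x : ZMod (p ^ l), g x = a * x + b)
    (v : ZMod (p ^ l)) :
    sInf {k : ℕ | ∃ w : ZMod (p ^ l), k = Nat.card (MulAction.orbit G w)} ∣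
      Nat.card (MulAction.orbit G v) := by
  have : Fact p.Prime := ⟨hp⟩
  replace hG : IsAffinePermGroup G := hG
  refine Nat.sInf_range_dvd_of_min_dvd _ v fun u hu => ?_
  by_cases hA : ∃ g₀ : G, IsUnit ((hG.multiplier g₀ : ZMod (p ^ l)) - 1)
  · obtain ⟨g₀, hg₀⟩ := hA
    obtain ⟨w, hw⟩ := hG.exists_mem_stabilizer_of_isUnit hg₀
    have hwu := hG.card_orbit_dvd hw hg₀ u
    have := (nonempty_orbit (M := G) u).to_subtype
    rw [Nat.le_antisymm (hu w) (Nat.le_of_dvd Nat.card_pos hwu)]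
    exact hG.card_orbit_dvd hw hg₀ v
  · have hpG := hG.isPGroup hl.ne' (not_exists.mp hA)
    obtain ⟨i, hi⟩ := hpG.card_orbit u
    obtain ⟨j, hj⟩ := hpG.card_orbit v
    have hij := hu v
    rw [hi, hj] at hij ⊢
    exact pow_dvd_pow p ((Nat.pow_le_pow_iff_right hp.one_lt).mp hij)
end

section
/- Fix a positive integer n, and let G be a subgroup of the group of permutations of ℤ/nℤ each of whose elements is an affine map, i.e. for every g ∈ G there exist a unit a ∈ (ℤ/nℤ)^× and b ∈ ℤ/nℤ with g(x) = a·x + b for all x ∈ ℤ/nℤ. Let λ(G) denote the minimum, over v ∈ ℤ/nℤ, of the cardinality of the G-orbit of v. Then λ(G) divides n. -/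
/-!
Strong induction on `n`: below every orbit there is an orbit whose size divides `n`.

If `G` contains a translation by `t ≠ 0`, it contains the translations by all multiples of
`m = gcd(t, n)`. The orbits of `G` are then full preimages of the orbits of the induced affine
action on `ℤ/m`, so each orbit size is `n/m` times an orbit size on `ℤ/m`: induction applies.

Otherwise `G` contains no nontrivial translation; as commutators of affine maps are translations,
`G` is abelian. Write `n = p^e m` with `p ∤ m`, and let `B` be a complement of the Sylow
`p`-subgroup. Since `|B|` is invertible mod `p^e`, averaging the `B`-orbit of `w mod p^e` gives a
point fixed by `B`; its stabiliser `A` has `p`-power index, hence index dividing `p^e`, and by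
commutativity it contains the stabiliser of `w mod p^e`. Induction for `A` acting on `ℤ/m` and
the Chinese remainder theorem give the required point.
-/

open Equiv MulAction Function

section AffinePerms

variable {R S : Type*} [CommRing R] [CommRing S]

def affinePerms (R : Type*) [CommRing R] : Subgroup (Perm R) where
  carrier := {g | ∃ (a : Rˣ) (b : R), ∀ x, g x = a * x + b}
  one_mem' := ⟨1, 0, fun x => by simp⟩
  mul_mem' := by
    rintro g h ⟨a, b, hg⟩ ⟨c, d, hh⟩
    refine ⟨a * c, a * d + b, fun x => ?_⟩
    simp only [Perm.mul_apply, hg, hh, Units.val_mul]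
    ring
  inv_mem' := by
    rintro g ⟨a, b, hg⟩
    refine ⟨a⁻¹, -(↑a⁻¹ * b), fun x => ?_⟩
    rw [Perm.inv_eq_iff_eq, hg]
    simp [mul_add]

lemma map_apply_eq_map_apply_of_mem_affinePerms {g : Perm R} (hg : g ∈ affinePerms R)
    (f : R →+* S) {x y : R} (hxy : f x = f y) : f (g x) = f (g y) := by
  obtain ⟨a, b, hg⟩ := hg
  simp only [hg, map_add, map_mul, hxy]

lemma apply_mul_sum_of_mem_affinePerms {g : Perm R} (hg : g ∈ affinePerms R) {ι : Type*}
    (s : Finset ι) (v : ι → R) {c : R} (hc : c * s.card = 1) :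
    g (c * ∑ i ∈ s, v i) = c * ∑ i ∈ s, g (v i) := by
  obtain ⟨a, b, hg⟩ := hg
  simp only [hg, Finset.sum_add_distrib, ← Finset.mul_sum, Finset.sum_const, nsmul_eq_mul]
  linear_combination (-b) * hc

lemma mul_comm_of_no_translation {G : Subgroup (Perm R)} (hG : G ≤ affinePerms R)
    (hT : ∀ t, Equiv.addLeft t ∈ G → t = 0) {g h : Perm R} (hg : g ∈ G) (hh : h ∈ G) :
    g * h = h * g := by
  obtain ⟨a, b, hga⟩ := hG hg
  obtain ⟨c, d, hha⟩ := hG hh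
  have hcomm : g * h = Equiv.addLeft (a * d + b - (c * b + d)) * (h * g) := by
    ext x
    simp only [Perm.mul_apply, hga, hha, coe_addLeft]
    ring
  have ht : Equiv.addLeft (a * d + b - (c * b + d)) ∈ G := by
    rw [← mul_inv_cancel_right (Equiv.addLeft _) (h * g), ← hcomm]
    exact G.mul_mem (G.mul_mem hg hh) (G.inv_mem (G.mul_mem hh hg))
  rw [hcomm, hT _ ht, Equiv.addLeft_zero, one_mul]

/-- The point `u` is the average of the `H`-orbit of `x`; affine maps commute with averaging. -/
theorem exists_fixed_of_isUnit_card {H : Subgroup (Perm R)} [Finite H] (hH : H ≤ affinePerms R)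
    (hcard : IsUnit (Nat.card H : R)) (x : R) :
    ∃ u, (∀ h ∈ H, h u = u) ∧
      ∀ g ∈ affinePerms R, (∀ h ∈ H, g * h = h * g) → g x = x → g u = u := by
  have := Fintype.ofFinite H
  obtain ⟨c, hc⟩ := hcard.exists_left_inv
  rw [Nat.card_eq_fintype_card, ← Finset.card_univ] at hc
  refine ⟨c * ∑ h : H, (h : Perm R) x, fun h₀ hh₀ => ?_, fun g hg hcomm hgx => ?_⟩
  · rw [apply_mul_sum_of_mem_affinePerms (hH hh₀) _ _ hc]
    congr 1
    exact Fintype.sum_equiv (Equiv.mulLeft ⟨h₀, hh₀⟩) _ _ fun h => rfl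
  · rw [apply_mul_sum_of_mem_affinePerms hg _ _ hc]
    congr 1
    refine Finset.sum_congr rfl fun h _ => ?_
    rw [← Perm.mul_apply, hcomm h h.2, Perm.mul_apply, hgx]

end AffinePerms

@[to_additive]
lemma MonoidHom.card_preimage_of_surjective {M N : Type*} [Group M] [Group N] {f : M →* N}
    (hf : Surjective f) (s : Set N) : Nat.card (f ⁻¹' s) = Nat.card f.ker * Nat.card s := by
  let e := QuotientGroup.quotientKerEquivOfSurjective f hf
  have hpre : f ⁻¹' s = QuotientGroup.mk ⁻¹' (e ⁻¹' s) := rfl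
  rw [hpre, Nat.card_congr (QuotientGroup.preimageMkEquivSubgroupProdSet _ _), Nat.card_prod,
    Nat.card_preimage_of_injective e.injective (by simp [e.surjective.range_eq])]

section Descend

variable {X Y : Type*} {π : X → Y} (hπ : Surjective π) (G : Subgroup (Perm X))
  (hG : ∀ g ∈ G, ∀ x y, π x = π y → π (g x) = π (g y))

noncomputable def descendHom : G →* Perm Y where
  toFun g :=
    { toFun := fun y => π ((g : Perm X) (surjInv hπ y))
      invFun := fun y => π ((g : Perm X)⁻¹ (surjInv hπ y))
      left_inv := fun y => by
        simp only
        rw [hG _ (G.inv_mem g.2) _ _ (surjInv_eq hπ _)]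
        simp [surjInv_eq hπ]
      right_inv := fun y => by
        simp [hG _ g.2 _ _ (surjInv_eq hπ _), surjInv_eq hπ] }
  map_one' := by ext y; simp [surjInv_eq hπ]
  map_mul' g h := by ext y; simp [hG _ g.2 _ _ (surjInv_eq hπ _)]

lemma descendHom_apply (g : G) (x : X) : descendHom hπ G hG g (π x) = π ((g : Perm X) x) :=
  hG g g.2 _ _ (surjInv_eq hπ _)

end Descend

section Reduce

variable {R S : Type*} [CommRing R] [CommRing S] {f : R →+* S} (hf : Surjective f)
  {G : Subgroup (Perm R)} (hG : G ≤ affinePerms R)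

noncomputable def reduceHom : G →* Perm S :=
  descendHom hf G fun _ hg _ _ => map_apply_eq_map_apply_of_mem_affinePerms (hG hg) f

lemma reduceHom_apply (g : G) (x : R) : reduceHom hf hG g (f x) = f ((g : Perm R) x) :=
  descendHom_apply hf G _ g x

lemma reduceHom_mem_affinePerms (g : G) : reduceHom hf hG g ∈ affinePerms S := by
  obtain ⟨a, b, hg⟩ := hG g.2
  refine ⟨Units.map f a, f b, fun y => ?_⟩
  obtain ⟨x, rfl⟩ := hf y
  simp [reduceHom_apply, hg]

lemma map_reduceHom_le (A : Subgroup G) : A.map (reduceHom hf hG) ≤ affinePerms S := by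
  rintro _ ⟨g, -, rfl⟩
  exact reduceHom_mem_affinePerms hf hG g

lemma range_reduceHom_le : (reduceHom hf hG).range ≤ affinePerms S := by
  rintro _ ⟨g, rfl⟩
  exact reduceHom_mem_affinePerms hf hG g

lemma orbit_eq_preimage (hker : ∀ k, f k = 0 → Equiv.addLeft k ∈ G) (x : R) :
    orbit G x = f ⁻¹' orbit (reduceHom hf hG).range (f x) := by
  ext y
  constructor
  · rintro ⟨g, rfl⟩
    exact ⟨⟨_, g, rfl⟩, reduceHom_apply hf hG g x⟩
  · rintro ⟨⟨_, g, rfl⟩, hy⟩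
    have hk : Equiv.addLeft (y - (g : Perm R) x) ∈ G := by
      refine hker _ ?_
      rw [map_sub, sub_eq_zero, ← reduceHom_apply hf hG]
      exact hy.symm
    exact ⟨⟨_, hk⟩ * g, sub_add_cancel y ((g : Perm R) x)⟩

lemma card_orbit_eq_card_ker_mul (hker : ∀ k, f k = 0 → Equiv.addLeft k ∈ G) (x : R) :
    Nat.card (orbit G x) =
      Nat.card (f : R →+ S).ker * Nat.card (orbit (reduceHom hf hG).range (f x)) := by
  rw [orbit_eq_preimage hf hG hker]
  exact AddMonoidHom.card_preimage_of_surjective (f := (f : R →+ S)) hf _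

lemma stabilizer_eq_inf_comap_reduceHom {S' : Type*} [CommRing S'] {f' : R →+* S'}
    (hf' : Surjective f') (hinj : Injective fun x => (f x, f' x)) (x : R) :
    stabilizer G x = (stabilizer (Perm S) (f x)).comap (reduceHom hf hG) ⊓
      (stabilizer (Perm S') (f' x)).comap (reduceHom hf' hG) := by
  ext g
  simp only [mem_stabilizer_iff, Subgroup.mem_inf, Subgroup.mem_comap, Perm.smul_def,
    reduceHom_apply, Subgroup.smul_def]
  rw [← Prod.mk.injEq, hinj.eq_iff]

end Reduce

section Stabilizers

variable {Γ X : Type*} [Group Γ]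

lemma card_orbit_eq_index (G : Subgroup (Perm X)) (x : X) :
    Nat.card (orbit G x) = (stabilizer G x).index := by
  rw [index_stabilizer, Nat.card_coe_set_eq]

lemma card_orbit_map_eq_relIndex (φ : Γ →* Perm X) (A : Subgroup Γ) (x : X) :
    Nat.card (orbit (A.map φ) x) = ((stabilizer (Perm X) x).comap φ).relIndex A := by
  rw [Subgroup.relIndex_comap, card_orbit_eq_index]
  rfl

lemma index_inf_comap_stabilizer (φ : Γ →* Perm X) (A : Subgroup Γ) (x : X) :
    (A ⊓ (stabilizer (Perm X) x).comap φ).index = A.index * Nat.card (orbit (A.map φ) x) := by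
  rw [card_orbit_map_eq_relIndex, ← Subgroup.inf_relIndex_left, mul_comm,
    Subgroup.relIndex_mul_index inf_le_left]

end Stabilizers

lemma ZMod.castHom_prod_bijective {a b n : ℕ} (ha : a ∣ n) (hb : b ∣ n) (hab : a.Coprime b)
    (h : a * b = n) :
    Bijective fun x : ZMod n => (castHom ha (ZMod a) x, castHom hb (ZMod b) x) := by
  subst h
  convert (ZMod.chineseRemainder hab).bijective using 1
  ext x <;> simp [ZMod.chineseRemainder]

lemma Sylow.exists_subgroup_not_dvd_card_index_eq {Γ : Type*} [Group Γ] [Finite Γ] {p : ℕ}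
    [Fact p.Prime] (P : Sylow p Γ) [P.Normal] :
    ∃ B : Subgroup Γ, ¬ p ∣ Nat.card B ∧ B.index = Nat.card P := by
  obtain ⟨B, hB⟩ := Subgroup.exists_right_complement'_of_coprime P.card_coprime_index
  exact ⟨B, hB.symm.index_eq_card ▸ P.not_dvd_index, hB.index_eq_card⟩

theorem exists_le_comap_stabilizer_index_dvd {Γ : Type*} [Group Γ] [Finite Γ]
    [IsMulCommutative Γ] {p e : ℕ} [hp : Fact p.Prime] (φ : Γ →* Perm (ZMod (p ^ e)))
    (hφ : ∀ g, φ g ∈ affinePerms (ZMod (p ^ e))) (y : ZMod (p ^ e)) :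
    ∃ u : ZMod (p ^ e), ((stabilizer (Perm (ZMod (p ^ e))) u).comap φ).index ∣ p ^ e ∧
      (stabilizer (Perm (ZMod (p ^ e))) y).comap φ ≤
        (stabilizer (Perm (ZMod (p ^ e))) u).comap φ := by
  obtain ⟨B, hBp, hBindex⟩ := (default : Sylow p Γ).exists_subgroup_not_dvd_card_index_eq
  obtain ⟨k, hk⟩ := IsPGroup.iff_card.mp (default : Sylow p Γ).isPGroup'
  have hH : B.map φ ≤ affinePerms _ := by rintro _ ⟨g, -, rfl⟩; exact hφ g
  have hunit : IsUnit (Nat.card (B.map φ) : ZMod (p ^ e)) := by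
    refine (ZMod.isUnit_iff_coprime _ _).2 (Nat.Coprime.pow_right _ (Nat.Coprime.symm ?_))
    exact (Nat.Prime.coprime_iff_not_dvd hp.out).2 fun h => hBp (h.trans (B.card_map_dvd φ))
  obtain ⟨u, hfix, hequiv⟩ := exists_fixed_of_isUnit_card hH hunit y
  set A := (stabilizer (Perm (ZMod (p ^ e))) u).comap φ
  refine ⟨u, ?_, fun g hg => hequiv _ (hφ g) ?_ hg⟩
  · have hBA : B ≤ A := fun b hb => hfix _ ⟨b, hb, rfl⟩
    obtain ⟨i, -, hi⟩ :=
      (Nat.dvd_prime_pow hp.out).1 (hk ▸ hBindex ▸ Subgroup.index_dvd_of_le hBA)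
    have hle : A.index ≤ p ^ e := by
      rw [← Subgroup.relIndex_top_right, ← card_orbit_map_eq_relIndex]
      exact (Finite.card_subtype_le _).trans (Nat.card_zmod _).le
    rw [hi] at hle ⊢
    exact pow_dvd_pow p ((Nat.pow_le_pow_iff_right hp.out.one_lt).1 hle)
  · rintro _ ⟨b, -, rfl⟩
    rw [← map_mul, ← map_mul, mul_comm' g b]

def ExistsOrbitCardDvdLE (n : ℕ) : Prop :=
  ∀ G : Subgroup (Perm (ZMod n)), G ≤ affinePerms (ZMod n) → ∀ w : ZMod n,
    ∃ u : ZMod n, Nat.card (orbit G u) ∣ n ∧ Nat.card (orbit G u) ≤ Nat.card (orbit G w)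

section Translations

variable {n : ℕ} [NeZero n] {G : Subgroup (Perm (ZMod n))}

lemma addLeft_mul_mem {t : ZMod n} (ht : Equiv.addLeft t ∈ G) (c : ZMod n) :
    Equiv.addLeft (c * t) ∈ G := by
  rw [← ZMod.natCast_zmod_val c, ← nsmul_eq_mul, ← Equiv.nsmul_addLeft]
  exact G.pow_mem ht _

lemma ZMod.exists_eq_mul_of_castHom_eq_zero {m : ℕ} (hm : m ∣ n) {x : ZMod n}
    (hx : castHom hm (ZMod m) x = 0) : ∃ c : ZMod n, x = c * m := by
  rw [← ZMod.natCast_zmod_val x, map_natCast, ZMod.natCast_eq_zero_iff] at hx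
  obtain ⟨c, hc⟩ := hx
  exact ⟨c, by rw [← ZMod.natCast_zmod_val x, hc]; push_cast; ring⟩

theorem exists_orbit_card_dvd_le_of_addLeft_mem (ih : ∀ m < n, ExistsOrbitCardDvdLE m)
    (hG : G ≤ affinePerms (ZMod n)) {t : ZMod n} (ht0 : t ≠ 0) (ht : Equiv.addLeft t ∈ G)
    (w : ZMod n) :
    ∃ u : ZMod n, Nat.card (orbit G u) ∣ n ∧
      Nat.card (orbit G u) ≤ Nat.card (orbit G w) := by
  set m := t.val.gcd n
  have hm : m ∣ n := Nat.gcd_dvd_right _ _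
  have hmn : m < n := (Nat.gcd_le_left _ (ZMod.val_pos.2 ht0)).trans_lt (ZMod.val_lt t)
  have hf := ZMod.castHom_surjective hm
  -- `(m : ZMod n) = t * t⁻¹`, so every multiple of `m` is a multiple of `t`
  have hker : ∀ k, ZMod.castHom hm (ZMod m) k = 0 → Equiv.addLeft k ∈ G := by
    intro k hk
    obtain ⟨c, rfl⟩ := ZMod.exists_eq_mul_of_castHom_eq_zero hm hk
    rw [← ZMod.mul_inv_eq_gcd, mul_comm t, ← mul_assoc]
    exact addLeft_mul_mem ht _
  have hcard := card_orbit_eq_card_ker_mul hf hG hker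
  have hn : Nat.card (ZMod.castHom hm (ZMod m) : ZMod n →+ ZMod m).ker * m = n := by
    simpa using (AddMonoidHom.card_preimage_of_surjective
      (f := (ZMod.castHom hm (ZMod m) : ZMod n →+ ZMod m)) hf Set.univ).symm
  obtain ⟨u', hdvd, hle⟩ := ih m hmn _ (range_reduceHom_le hf hG) (ZMod.castHom hm (ZMod m) w)
  obtain ⟨u, rfl⟩ := hf u'
  refine ⟨u, ?_, ?_⟩
  · rw [hcard]
    exact (mul_dvd_mul_left _ hdvd).trans hn.dvd
  · rw [hcard, hcard]
    exact Nat.mul_le_mul_left _ hle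

end Translations

theorem exists_orbit_card_dvd_le_of_no_translation {n : ℕ} [NeZero n]
    {G : Subgroup (Perm (ZMod n))} (hn : 1 < n) (ih : ∀ m < n, ExistsOrbitCardDvdLE m)
    (hG : G ≤ affinePerms (ZMod n)) (hT : ∀ t, Equiv.addLeft t ∈ G → t = 0) (w : ZMod n) :
    ∃ u : ZMod n, Nat.card (orbit G u) ∣ n ∧
      Nat.card (orbit G u) ≤ Nat.card (orbit G w) := by
  have : IsMulCommutative G :=
    ⟨⟨fun g h => Subtype.ext (mul_comm_of_no_translation hG hT g.2 h.2)⟩⟩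
  set p := n.minFac
  have hp : p.Prime := Nat.minFac_prime hn.ne'
  have : Fact p.Prime := ⟨hp⟩
  obtain ⟨e, m, hpm, hnm⟩ := Nat.exists_eq_pow_mul_and_not_dvd (NeZero.ne n) p hp.ne_one
  have hq : p ^ e ∣ n := Dvd.intro _ hnm.symm
  have hm : m ∣ n := Dvd.intro_left _ hnm.symm
  have hmn : m < n :=
    (Nat.le_of_dvd (by omega) hm).lt_of_ne fun h => hpm (h ▸ Nat.minFac_dvd n)
  have hcop : (p ^ e).Coprime m := .pow_left _ ((Nat.Prime.coprime_iff_not_dvd hp).2 hpm)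
  have hcrt := ZMod.castHom_prod_bijective hq hm hcop hnm.symm
  have hf₁ := ZMod.castHom_surjective hq
  have hf₂ := ZMod.castHom_surjective hm
  have hstab := stabilizer_eq_inf_comap_reduceHom hf₁ hG hf₂ hcrt.1
  set φ₂ := reduceHom hf₂ hG
  obtain ⟨u₁, hu₁, hle₁⟩ := exists_le_comap_stabilizer_index_dvd (reduceHom hf₁ hG)
    (reduceHom_mem_affinePerms hf₁ hG) (ZMod.castHom hq _ w)
  set A := (stabilizer (Perm (ZMod (p ^ e))) u₁).comap (reduceHom hf₁ hG)
  obtain ⟨u₂, hdvd₂, hle₂⟩ :=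
    ih m hmn (A.map φ₂) (map_reduceHom_le hf₂ hG A) (ZMod.castHom hm _ w)
  obtain ⟨u, hu⟩ := hcrt.2 (u₁, u₂)
  simp only [Prod.mk.injEq] at hu
  have hcard : Nat.card (orbit G u) = A.index * Nat.card (orbit (A.map φ₂) u₂) := by
    rw [card_orbit_eq_index, hstab, hu.1, hu.2, index_inf_comap_stabilizer]
  refine ⟨u, hcard ▸ (mul_dvd_mul hu₁ hdvd₂).trans hnm.symm.dvd, ?_⟩
  calc Nat.card (orbit G u)
      ≤ A.index * Nat.card (orbit (A.map φ₂) (ZMod.castHom hm _ w)) :=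
        hcard ▸ Nat.mul_le_mul_left _ hle₂
    _ = (A ⊓ (stabilizer (Perm (ZMod m)) (ZMod.castHom hm _ w)).comap φ₂).index :=
        (index_inf_comap_stabilizer φ₂ A _).symm
    _ ≤ (stabilizer G w).index := by
        rw [hstab]
        exact Subgroup.index_antitone (inf_le_inf_right _ hle₁)
    _ = Nat.card (orbit G w) := (card_orbit_eq_index G w).symm

theorem existsOrbitCardDvdLE (n : ℕ) : ExistsOrbitCardDvdLE n := by
  induction n using Nat.strong_induction_on with
  | _ n ih =>
  intro G hG w
  rcases Nat.lt_trichotomy n 1 with hn | rfl | hn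
  · obtain rfl : n = 0 := by omega
    exact ⟨w, dvd_zero _, le_rfl⟩
  · exact ⟨w, (Nat.card_of_subsingleton (⟨w, mem_orbit_self w⟩ : orbit G w)).dvd, le_rfl⟩
  · have : NeZero n := ⟨by omega⟩
    by_cases hT : ∀ t, Equiv.addLeft t ∈ G → t = 0
    · exact exists_orbit_card_dvd_le_of_no_translation hn ih hG hT w
    · push Not at hT
      obtain ⟨t, ht, ht0⟩ := hT
      exact exists_orbit_card_dvd_le_of_addLeft_mem ih hG ht0 ht w

theorem stmt_8_general (n : ℕ) (G : Subgroup (Equiv.Perm (ZMod n)))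
    (hG : ∀ g ∈ G, ∃ (a : (ZMod n)ˣ) (b : ZMod n), ∀ x : ZMod n, g x = a * x + b) :
    sInf {k : ℕ | ∃ w : ZMod n, k = Nat.card (MulAction.orbit G w)} ∣ n := by
  set S := {k : ℕ | ∃ w : ZMod n, k = Nat.card (orbit G w)}
  obtain ⟨w, hw⟩ := Nat.sInf_mem (⟨_, 0, rfl⟩ : S.Nonempty)
  obtain ⟨u, hdvd, hle⟩ := existsOrbitCardDvdLE n G (fun g hg => hG g hg) w
  have hu : Nat.card (orbit G u) ∈ S := ⟨u, rfl⟩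
  rwa [le_antisymm (Nat.sInf_le hu) (hw ▸ hle)]

theorem stmt_8 (n : ℕ) (hn : 0 < n) (G : Subgroup (Equiv.Perm (ZMod n)))
    (hG : ∀ g ∈ G, ∃ (a : (ZMod n)ˣ) (b : ZMod n), ∀ x : ZMod n, g x = a * x + b) :
    sInf {k : ℕ | ∃ w : ZMod n, k = Nat.card (MulAction.orbit G w)} ∣ n :=
  stmt_8_general n G hG
end
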